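/- arXiv:2203.02103 — 5 statements merged into one kernel-verified Lean document; each statement's English description precedes it below -/
import Mathlib

section
/- Let P, Q : ℝ → ℝ be polynomial functions and let j, k be natural numbers. Let T = {(x,y) ∈ ℝ² : x > 0, y > 0, x + y < 1} be the open reference triangle. Then ∫_T P((x−y)/(x+y))·(x+y)^j·x·y · Q((x−y)/(x+y))·(x+y)^k·x·y dx dy = (1/(32·(j+k+6))) · ∫_{−1}^{1} P(t)·Q(t)·(1−t)²·(1+t)² dt. Consequently, if P and Q are orthogonal on [−1,1] with respect to the Jacobi weight (1−t)²(1+t)² (e.g. Jacobi polynomials J_j^{2,2} and J_k^{2,2} with j ≠ k), the corresponding edge-based basis functions φ_j = P((λ₁−λ₂)/(λ₁+λ₂))(λ₁+λ₂)^j λ₁λ₂ and φ_k are L²-orthogonal on the triangle. -/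
open MeasureTheory Real

/-- The open reference triangle in `ℝ²`. -/
def refTriangle : Set (ℝ × ℝ) := {p | 0 < p.1 ∧ 0 < p.2 ∧ p.1 + p.2 < 1}

/-! In the collapsed (Duffy) coordinates `x = s(1+t)/2`, `y = s(1-t)/2`, which map
`(0,1) × (-1,1)` bijectively onto the triangle with Jacobian `s/2`, one has `x + y = s` and
`(x-y)/(x+y) = t`. So any integrand `g((x-y)/(x+y)) (x+y)^n` separates, and its integral is
`1/(2(n+2)) ∫₋₁¹ g`. The product of the two edge functions has this form with `n = j+k+4`,
because `xy = (x+y)² (1-t)(1+t)/4`. -/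

open Set

noncomputable def duffyMap (p : ℝ × ℝ) : ℝ × ℝ := (p.1 * (1 + p.2) / 2, p.1 * (1 - p.2) / 2)

noncomputable def duffyFDeriv (p : ℝ × ℝ) : ℝ × ℝ →L[ℝ] ℝ × ℝ :=
  (((1 + p.2) / 2) • ContinuousLinearMap.fst ℝ ℝ ℝ
      + (p.1 / 2) • ContinuousLinearMap.snd ℝ ℝ ℝ).prod
    (((1 - p.2) / 2) • ContinuousLinearMap.fst ℝ ℝ ℝ
      - (p.1 / 2) • ContinuousLinearMap.snd ℝ ℝ ℝ)

lemma duffyFDeriv_apply (p q : ℝ × ℝ) :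
    duffyFDeriv p q
      = ((1 + p.2) / 2 * q.1 + p.1 / 2 * q.2, (1 - p.2) / 2 * q.1 - p.1 / 2 * q.2) := by
  simp [duffyFDeriv, smul_eq_mul]

lemma det_duffyFDeriv (p : ℝ × ℝ) : (duffyFDeriv p).det = -(p.1 / 2) := by
  change LinearMap.det (duffyFDeriv p : ℝ × ℝ →ₗ[ℝ] ℝ × ℝ) = _
  rw [← LinearMap.det_toMatrix (Module.Basis.finTwoProd ℝ), Matrix.det_fin_two]
  simp only [LinearMap.toMatrix_apply, Module.Basis.coe_finTwoProd_repr,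
    ContinuousLinearMap.coe_coe, Module.Basis.finTwoProd_zero, Module.Basis.finTwoProd_one,
    duffyFDeriv_apply, Matrix.cons_val_zero, Matrix.cons_val_one]
  ring

lemma hasFDerivAt_duffyMap (p : ℝ × ℝ) : HasFDerivAt duffyMap (duffyFDeriv p) p := by
  have hfst := hasFDerivAt_fst (𝕜 := ℝ) (E := ℝ) (F := ℝ) (p := p)
  have hsnd := hasFDerivAt_snd (𝕜 := ℝ) (E := ℝ) (F := ℝ) (p := p)
  refine (((hfst.mul ((hasFDerivAt_const 1 p).add hsnd)).mul_const 2⁻¹).prodMk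
    ((hfst.mul ((hasFDerivAt_const 1 p).sub hsnd)).mul_const 2⁻¹)).congr_fderiv ?_
  ext <;> simp [duffyFDeriv, smul_eq_mul] <;> ring

lemma duffyMap_image : duffyMap '' (Ioo 0 1 ×ˢ Ioo (-1) 1) = refTriangle := by
  ext ⟨x, y⟩
  constructor
  · rintro ⟨⟨s, t⟩, ⟨⟨hs0, hs1⟩, ht0, ht1⟩, h⟩
    simp only [duffyMap, Prod.mk.injEq] at h
    obtain ⟨rfl, rfl⟩ := h
    refine ⟨?_, ?_, ?_⟩ <;> nlinarith
  · rintro (⟨hx, hy, hxy⟩ : 0 < x ∧ 0 < y ∧ x + y < 1)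
    have hsum : 0 < x + y := by linarith
    refine ⟨(x + y, (x - y) / (x + y)), ⟨⟨hsum, hxy⟩, ?_, ?_⟩, ?_⟩
    · rw [lt_div_iff₀ hsum]; linarith
    · rw [div_lt_one hsum]; linarith
    · simp only [duffyMap, Prod.mk.injEq]
      constructor <;> field_simp <;> ring

lemma injOn_duffyMap : InjOn duffyMap (Ioo 0 1 ×ˢ Ioo (-1) 1) := by
  rintro ⟨s, t⟩ ⟨⟨hs, _⟩, _⟩ ⟨s', t'⟩ _ h
  simp only [duffyMap, Prod.mk.injEq] at h
  obtain ⟨h1, h2⟩ := h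
  obtain rfl : s = s' := by linarith
  have : s * t = s * t' := by linarith
  rw [mul_left_cancel₀ hs.ne' this]

lemma measurableSet_refTriangle : MeasurableSet refTriangle :=
  ((isOpen_lt continuous_const continuous_fst).inter ((isOpen_lt continuous_const
    continuous_snd).inter (isOpen_lt (continuous_fst.add continuous_snd)
    continuous_const))).measurableSet

theorem integral_refTriangle_eq_integral_duffyMap {E : Type*} [NormedAddCommGroup E]
    [NormedSpace ℝ E] (f : ℝ × ℝ → E) :
    ∫ p in refTriangle, f p = ∫ p in Ioo 0 1 ×ˢ Ioo (-1) 1, (p.1 / 2) • f (duffyMap p) := by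
  have hS : MeasurableSet (Ioo (0 : ℝ) 1 ×ˢ Ioo (-1 : ℝ) 1) :=
    measurableSet_Ioo.prod measurableSet_Ioo
  rw [← duffyMap_image, integral_image_eq_integral_abs_det_fderiv_smul volume hS
    (fun p _ => (hasFDerivAt_duffyMap p).hasFDerivWithinAt) injOn_duffyMap]
  refine setIntegral_congr_fun hS fun p ⟨⟨hs, _⟩, _⟩ => ?_
  rw [det_duffyFDeriv, abs_neg, abs_of_pos (half_pos hs)]

lemma integral_Ioo_zero_one_pow (n : ℕ) : ∫ s in Ioo (0 : ℝ) 1, s ^ n = 1 / (n + 1) := by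
  rw [← integral_Ioc_eq_integral_Ioo, ← intervalIntegral.integral_of_le zero_le_one,
    integral_pow]
  simp

theorem integral_refTriangle_ratio_mul_pow (g : ℝ → ℝ) (n : ℕ) :
    ∫ p in refTriangle, g ((p.1 - p.2) / (p.1 + p.2)) * (p.1 + p.2) ^ n
      = 1 / (2 * (n + 2)) * ∫ t in (-1 : ℝ)..1, g t := by
  have hS : MeasurableSet (Ioo (0 : ℝ) 1 ×ˢ Ioo (-1 : ℝ) 1) :=
    measurableSet_Ioo.prod measurableSet_Ioo
  rw [integral_refTriangle_eq_integral_duffyMap,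
    setIntegral_congr_fun hS (g := fun p : ℝ × ℝ => p.1 ^ (n + 1) * (g p.2 / 2))]
  · rw [Measure.volume_eq_prod, setIntegral_prod_mul (fun s => s ^ (n + 1)) (fun t => g t / 2),
      integral_Ioo_zero_one_pow, integral_div, ← integral_Ioc_eq_integral_Ioo,
      ← intervalIntegral.integral_of_le (by norm_num)]
    push_cast
    field_simp
    ring
  · rintro ⟨s, t⟩ ⟨⟨hs, _⟩, _⟩
    have hsum : s * (1 + t) / 2 + s * (1 - t) / 2 = s := by ring
    have hratio : (s * (1 + t) / 2 - s * (1 - t) / 2) / s = t := by field_simp; ring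
    simp only [duffyMap, smul_eq_mul, hsum, hratio]
    ring

/-- Reduction of the `L²` inner product of two edge-based basis functions
`φ_j = P((λ₁−λ₂)/(λ₁+λ₂))(λ₁+λ₂)^j λ₁λ₂` on the reference triangle to a weighted
univariate integral with Jacobi weight `(1−t)²(1+t)²`. -/
theorem edge_basis_orthogonality (P Q : Polynomial ℝ) (j k : ℕ) :
    ∫ p in refTriangle,
        (P.eval ((p.1 - p.2) / (p.1 + p.2)) * (p.1 + p.2) ^ j * p.1 * p.2) *
        (Q.eval ((p.1 - p.2) / (p.1 + p.2)) * (p.1 + p.2) ^ k * p.1 * p.2)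
      = (1 / (32 * ((j : ℝ) + (k : ℝ) + 6))) *
        ∫ t in (-1 : ℝ)..1, P.eval t * Q.eval t * (1 - t) ^ 2 * (1 + t) ^ 2 := by
  set w : ℝ → ℝ := fun t => P.eval t * Q.eval t * (1 - t) ^ 2 * (1 + t) ^ 2
  rw [setIntegral_congr_fun measurableSet_refTriangle (g := fun p : ℝ × ℝ =>
      (w ((p.1 - p.2) / (p.1 + p.2)) / 16) * (p.1 + p.2) ^ (j + k + 4))]
  · rw [integral_refTriangle_ratio_mul_pow (fun t => w t / 16), intervalIntegral.integral_div]
    push_cast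
    field_simp
    ring
  · rintro ⟨x, y⟩ (⟨hx, hy, _⟩ : 0 < x ∧ 0 < y ∧ x + y < 1)
    have hsum : x + y ≠ 0 := by positivity
    simp only [w]
    field_simp
    ring
end

section
/- Let P, P', Q, Q', R, R' : ℝ → ℝ be polynomial functions and let n₁, n₁', n₂, n₂' be natural numbers. Let K = {(x,y,z) ∈ ℝ³ : x > 0, y > 0, z > 0, x + y + z < 1} be the open reference tetrahedron and write b(x,y,z) = x·y·z·(1−x−y−z). Then ∫_K [P(2x−1)·Q(2y/(1−x)−1)·(1−x)^{n₁}·R(2z/(1−x−y)−1)·(1−x−y)^{n₂}·b] · [P'(2x−1)·Q'(2y/(1−x)−1)·(1−x)^{n₁'}·R'(2z/(1−x−y)−1)·(1−x−y)^{n₂'}·b] dx dy dz = (∫_0^1 P(2s−1)·P'(2s−1)·s²·(1−s)^{n₁+n₁'+n₂+n₂'+8} ds) · (∫_0^1 Q(2t−1)·Q'(2t−1)·t²·(1−t)^{n₂+n₂'+5} dt) · (∫_0^1 R(2r−1)·R'(2r−1)·r²·(1−r)² dr). Consequently, with the Jacobi polynomial choices J_{n₀}^{2(n₁+n₂)+8,2},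 J_{n₁}^{2n₂+5,2}, J_{n₂}^{2,2}, the interior basis functions φ_{n₀,n₁,n₂} of the tetrahedral elements are mutually L²-orthogonal on K. -/
/-!
The iterated Duffy transform `(s, t, r) ↦ (s, (1 - s) t, (1 - s)(1 - t) r)` maps the open unit
cube bijectively onto the tetrahedron with Jacobian `(1 - s)² (1 - t)`. Under it the quotients
`2y/(1-x) - 1` and `2z/(1-x-y) - 1` become `2t - 1` and `2r - 1`, the powers of `1 - x` and
`1 - x - y` split into powers of `1 - s` and `1 - t`, and the bubble becomes
`s t r (1 - r) (1 - s)³ (1 - t)²`, so the pulled-back integrand is a product of a function of `s`,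
one of `t` and one of `r`, and Fubini factors the integral. Neither the change of variables nor
this Fubini step needs integrability, so the factorization holds for arbitrary profile functions.
-/

open MeasureTheory Real

/-- The open reference tetrahedron in `ℝ³` (coordinates `(p.1, p.2.1, p.2.2)`). -/
def refTet : Set (ℝ × ℝ × ℝ) :=
  {p | 0 < p.1 ∧ 0 < p.2.1 ∧ 0 < p.2.2 ∧ p.1 + p.2.1 + p.2.2 < 1}

/-- The quartic bubble `b = x·y·z·(1−x−y−z)` on the reference tetrahedron. -/
def bubble (p : ℝ × ℝ × ℝ) : ℝ := p.1 * p.2.1 * p.2.2 * (1 - p.1 - p.2.1 - p.2.2)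

open Set

def unitCube : Set (ℝ × ℝ × ℝ) := Ioo 0 1 ×ˢ Ioo 0 1 ×ˢ Ioo 0 1

theorem measurableSet_unitCube : MeasurableSet unitCube :=
  measurableSet_Ioo.prod (measurableSet_Ioo.prod measurableSet_Ioo)

theorem setIntegral_unitCube_mul {L : Type*} [RCLike L] (f g h : ℝ → L) :
    ∫ p in unitCube, f p.1 * g p.2.1 * h p.2.2 =
      (∫ s in (0 : ℝ)..1, f s) * (∫ t in (0 : ℝ)..1, g t) * ∫ r in (0 : ℝ)..1, h r := by
  simp only [intervalIntegral.integral_of_le zero_le_one, integral_Ioc_eq_integral_Ioo,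
    unitCube, mul_assoc, Measure.volume_eq_prod]
  rw [setIntegral_prod_mul f (fun q : ℝ × ℝ => g q.1 * h q.2), setIntegral_prod_mul]

def duffy (p : ℝ × ℝ × ℝ) : ℝ × ℝ × ℝ :=
  (p.1, (1 - p.1) * p.2.1, (1 - p.1) * (1 - p.2.1) * p.2.2)

theorem injOn_duffy : InjOn duffy unitCube := by
  rintro ⟨s, t, r⟩ ⟨⟨-, hs⟩, ⟨-, ht⟩, -⟩ ⟨s', t', r'⟩ - h
  simp only [duffy, Prod.mk.injEq] at h
  obtain ⟨rfl, hy, hz⟩ := h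
  have hs : 1 - s ≠ 0 := by linarith
  obtain rfl := mul_left_cancel₀ hs hy
  have ht : 1 - t ≠ 0 := by linarith
  rw [mul_left_cancel₀ (mul_ne_zero hs ht) hz]

theorem duffy_image_unitCube : duffy '' unitCube = refTet := by
  ext ⟨x, y, z⟩
  simp only [refTet, unitCube, mem_image, mem_prod, mem_Ioo, duffy, Prod.exists,
    Prod.mk.injEq]
  constructor
  · rintro ⟨s, t, r, ⟨⟨hs0, hs1⟩, ⟨ht0, ht1⟩, hr0, hr1⟩, rfl, rfl, rfl⟩
    have hs : 0 < 1 - s := by linarith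
    have ht : 0 < 1 - t := by linarith
    have hr : 0 < 1 - r := by linarith
    refine ⟨hs0, by positivity, by positivity, ?_⟩
    have hsum : s + (1 - s) * t + (1 - s) * (1 - t) * r = 1 - (1 - s) * (1 - t) * (1 - r) := by
      ring
    linarith [mul_pos (mul_pos hs ht) hr]
  · rintro ⟨hx, hy, hz, hxyz⟩
    have hx1 : 0 < 1 - x := by linarith
    have hxy : 0 < 1 - x - y := by linarith
    refine ⟨x, y / (1 - x), z / (1 - x - y), ⟨⟨hx, by linarith⟩, ⟨by positivity, ?_⟩,
      by positivity, ?_⟩, rfl, by field_simp, ?_⟩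
    · rw [div_lt_one hx1]; linarith
    · rw [div_lt_one hxy]; linarith
    · rw [show (1 - x) * (1 - y / (1 - x)) = 1 - x - y by field_simp]
      field_simp

noncomputable def prodEquivFinThree : (ℝ × ℝ × ℝ) ≃ₗ[ℝ] (Fin 3 → ℝ) where
  toFun p := ![p.1, p.2.1, p.2.2]
  invFun v := (v 0, v 1, v 2)
  map_add' p q := by ext i; fin_cases i <;> rfl
  map_smul' c p := by ext i; fin_cases i <;> rfl
  left_inv p := rfl
  right_inv v := by ext i; fin_cases i <;> rfl

@[simp]
theorem prodEquivFinThree_apply (p : ℝ × ℝ × ℝ) : prodEquivFinThree p = ![p.1, p.2.1, p.2.2] :=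
  rfl

@[simp]
theorem prodEquivFinThree_symm_apply (v : Fin 3 → ℝ) : prodEquivFinThree.symm v = (v 0, v 1, v 2) :=
  rfl

def duffyJacobian (p : ℝ × ℝ × ℝ) : Matrix (Fin 3) (Fin 3) ℝ :=
  !![1, 0, 0;
     -p.2.1, 1 - p.1, 0;
     -((1 - p.2.1) * p.2.2), -((1 - p.1) * p.2.2), (1 - p.1) * (1 - p.2.1)]

noncomputable def duffyDeriv (p : ℝ × ℝ × ℝ) : (ℝ × ℝ × ℝ) →L[ℝ] (ℝ × ℝ × ℝ) :=
  LinearMap.toContinuousLinearMap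
    (prodEquivFinThree.symm.toLinearMap ∘ₗ (duffyJacobian p).toLin' ∘ₗ
      prodEquivFinThree.toLinearMap)

theorem hasFDerivAt_duffy (p : ℝ × ℝ × ℝ) : HasFDerivAt duffy (duffyDeriv p) p := by
  have hx : HasFDerivAt (fun q : ℝ × ℝ × ℝ => q.1) (.fst ℝ ℝ (ℝ × ℝ)) p := hasFDerivAt_fst
  have hy : HasFDerivAt (fun q : ℝ × ℝ × ℝ => q.2.1) _ p := hasFDerivAt_snd.fst (𝕜 := ℝ)
  have hz : HasFDerivAt (fun q : ℝ × ℝ × ℝ => q.2.2) _ p := hasFDerivAt_snd.snd (𝕜 := ℝ)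
  refine (hx.prodMk ((hx.const_sub 1).mul hy |>.prodMk
    (((hx.const_sub 1).mul (hy.const_sub 1)).mul hz))).congr_fderiv ?_
  ext <;> simp [duffyDeriv, duffyJacobian] <;> ring

theorem det_duffyDeriv (p : ℝ × ℝ × ℝ) :
    (duffyDeriv p).det = (1 - p.1) ^ 2 * (1 - p.2.1) := by
  refine (LinearMap.det_conj (duffyJacobian p).toLin' prodEquivFinThree.symm).trans ?_
  rw [LinearMap.det_toLin', duffyJacobian, Matrix.det_fin_three]
  simp only [Matrix.of_apply, Matrix.cons_val', Matrix.cons_val_zero, Matrix.cons_val_one,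
    Matrix.cons_val, Matrix.cons_val_fin_one]
  ring

-- Instance search does not see through `volume = volume.prod (volume.prod volume)`.
instance : Measure.IsAddHaarMeasure (volume : Measure (ℝ × ℝ × ℝ)) :=
  Measure.prod.instIsAddHaarMeasure _ _

theorem integral_refTet_eq_setIntegral_unitCube {E : Type*} [NormedAddCommGroup E]
    [NormedSpace ℝ E] (f : ℝ × ℝ × ℝ → E) :
    ∫ p in refTet, f p = ∫ p in unitCube, ((1 - p.1) ^ 2 * (1 - p.2.1)) • f (duffy p) := by
  rw [← duffy_image_unitCube, integral_image_eq_integral_abs_det_fderiv_smul volume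
    measurableSet_unitCube (fun p _ ↦ (hasFDerivAt_duffy p).hasFDerivWithinAt) injOn_duffy]
  refine setIntegral_congr_fun measurableSet_unitCube fun p ⟨⟨_, hs⟩, ⟨_, ht⟩, _⟩ ↦ ?_
  rw [det_duffyDeriv, abs_of_nonneg]
  have : 0 ≤ 1 - p.1 := by linarith
  have : 0 ≤ 1 - p.2.1 := by linarith
  positivity

noncomputable def interiorBasis (f g h : ℝ → ℝ) (n₁ n₂ : ℕ) (p : ℝ × ℝ × ℝ) : ℝ :=
  f (2 * p.1 - 1) * g (2 * p.2.1 / (1 - p.1) - 1) * (1 - p.1) ^ n₁ *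
    h (2 * p.2.2 / (1 - p.1 - p.2.1) - 1) * (1 - p.1 - p.2.1) ^ n₂ * bubble p

theorem interiorBasis_duffy (f g h : ℝ → ℝ) (n₁ n₂ : ℕ) {p : ℝ × ℝ × ℝ} (hs : p.1 ≠ 1)
    (ht : p.2.1 ≠ 1) :
    interiorBasis f g h n₁ n₂ (duffy p) =
      f (2 * p.1 - 1) * g (2 * p.2.1 - 1) * h (2 * p.2.2 - 1) *
        (p.1 * p.2.1 * p.2.2 * (1 - p.2.2)) * (1 - p.1) ^ (n₁ + n₂ + 3) *
          (1 - p.2.1) ^ (n₂ + 2) := by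
  obtain ⟨s, t, r⟩ := p
  have hs : 1 - s ≠ 0 := sub_ne_zero.2 hs.symm
  have ht : 1 - t ≠ 0 := sub_ne_zero.2 ht.symm
  have hxy : 1 - s - (1 - s) * t = (1 - s) * (1 - t) := by ring
  simp only [interiorBasis, bubble, duffy, hxy, mul_div_assoc, mul_div_cancel_left₀ _ hs,
    mul_div_cancel_left₀ _ (mul_ne_zero hs ht), mul_pow]
  ring

theorem setIntegral_refTet_interiorBasis_mul (f g h f' g' h' : ℝ → ℝ) (n₁ n₁' n₂ n₂' : ℕ) :
    ∫ p in refTet, interiorBasis f g h n₁ n₂ p * interiorBasis f' g' h' n₁' n₂' p =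
      (∫ s in (0 : ℝ)..1,
          f (2 * s - 1) * f' (2 * s - 1) * s ^ 2 * (1 - s) ^ (n₁ + n₁' + n₂ + n₂' + 8)) *
        (∫ t in (0 : ℝ)..1, g (2 * t - 1) * g' (2 * t - 1) * t ^ 2 * (1 - t) ^ (n₂ + n₂' + 5)) *
        (∫ r in (0 : ℝ)..1, h (2 * r - 1) * h' (2 * r - 1) * r ^ 2 * (1 - r) ^ 2) := by
  rw [integral_refTet_eq_setIntegral_unitCube, ← setIntegral_unitCube_mul]
  refine setIntegral_congr_fun measurableSet_unitCube fun p ⟨⟨_, hs⟩, ⟨_, ht⟩, _⟩ ↦ ?_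
  rw [smul_eq_mul, interiorBasis_duffy _ _ _ _ _ hs.ne ht.ne,
    interiorBasis_duffy _ _ _ _ _ hs.ne ht.ne]
  ring

/-- Iterated-Duffy-transform factorization of the `L²` inner product of two interior
basis functions of the tetrahedral element into a product of three weighted
univariate integrals. -/
theorem interior_basis_orthogonality_3D (P P' Q Q' R R' : Polynomial ℝ)
    (n₁ n₁' n₂ n₂' : ℕ) :
    ∫ p in refTet,
        (P.eval (2 * p.1 - 1) * Q.eval (2 * p.2.1 / (1 - p.1) - 1) * (1 - p.1) ^ n₁ *
          R.eval (2 * p.2.2 / (1 - p.1 - p.2.1) - 1) * (1 - p.1 - p.2.1) ^ n₂ * bubble p) *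
        (P'.eval (2 * p.1 - 1) * Q'.eval (2 * p.2.1 / (1 - p.1) - 1) * (1 - p.1) ^ n₁' *
          R'.eval (2 * p.2.2 / (1 - p.1 - p.2.1) - 1) * (1 - p.1 - p.2.1) ^ n₂' * bubble p)
      = (∫ s in (0 : ℝ)..1,
            P.eval (2 * s - 1) * P'.eval (2 * s - 1) * s ^ 2 *
              (1 - s) ^ (n₁ + n₁' + n₂ + n₂' + 8)) *
        (∫ t in (0 : ℝ)..1,
            Q.eval (2 * t - 1) * Q'.eval (2 * t - 1) * t ^ 2 * (1 - t) ^ (n₂ + n₂' + 5)) *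
        (∫ r in (0 : ℝ)..1,
            R.eval (2 * r - 1) * R'.eval (2 * r - 1) * r ^ 2 * (1 - r) ^ 2) :=
  setIntegral_refTet_interiorBasis_mul (P.eval ·) (Q.eval ·) (R.eval ·) (P'.eval ·) (Q'.eval ·)
    (R'.eval ·) n₁ n₁' n₂ n₂'
end

section
/- Let p be a natural number and let w₁, w₂ be polynomials in ℝ[x,y] (i.e. MvPolynomial (Fin 2) ℝ) with total degree at most p such that ∂ₓw₁ + ∂ᵧw₂ = 0. Then there exists a polynomial φ ∈ ℝ[x,y] of total degree at most p + 1 such that w₁ = ∂ᵧφ and w₂ = −∂ₓφ; that is, every divergence-free polynomial vector field of degree ≤ p on ℝ² is the rotated gradient (curl) of a polynomial potential of degree ≤ p + 1. -/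
/-!
Take `φ = ∫₀^y w₁ dy - ∫₀^x w₂(t, 0) dt`. Then `∂ᵧφ = w₁`, and
`∂ₓφ = ∫₀^y ∂ₓw₁ dy - w₂(x, 0) = -∫₀^y ∂ᵧw₂ dy - w₂(x, 0) = -w₂` by the divergence condition.
Formal integration of monomials raises the total degree by at most one, and the restriction
`w₂(x, 0) = w₂ - ∫₀^y ∂ᵧw₂ dy` does not raise it at all.
-/

open MvPolynomial

theorem Finsupp.add_single_tsub_single_comm {σ : Type*} {i j : σ} (hij : i ≠ j) (m : σ →₀ ℕ) :
    m + single j 1 - single i 1 = m - single i 1 + single j 1 := by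
  classical
  ext k
  simp only [coe_add, coe_tsub, Pi.add_apply, Pi.sub_apply, single_apply]
  split_ifs <;> grind

namespace MvPolynomial

variable {σ K : Type*} [Field K]

/-- The antiderivative in `X i` that vanishes on the hyperplane `X i = 0`. -/
noncomputable def integral (i : σ) : MvPolynomial σ K →ₗ[K] MvPolynomial σ K :=
  (basisMonomials σ K).constr K fun m => monomial (m + Finsupp.single i 1) (m i + 1 : K)⁻¹

theorem integral_monomial (i : σ) (m : σ →₀ ℕ) (a : K) :
    integral i (monomial m a) = monomial (m + Finsupp.single i 1) (a / (m i + 1)) := by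
  have hm : monomial m a = a • basisMonomials σ K m := by
    rw [coe_basisMonomials, smul_monomial, smul_eq_mul, mul_one]
  rw [hm, map_smul, integral, Module.Basis.constr_basis, smul_monomial, smul_eq_mul,
    div_eq_mul_inv]

theorem pderiv_integral_self [CharZero K] (i : σ) (f : MvPolynomial σ K) :
    pderiv i (integral i f) = f := by
  induction f using MvPolynomial.induction_on' with
  | monomial m a =>
    have hm : (m i + 1 : K) ≠ 0 := Nat.cast_add_one_ne_zero _
    rw [integral_monomial, pderiv_monomial, add_tsub_cancel_right]
    simp [hm]
  | add f g hf hg => rw [map_add, map_add, hf, hg]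

theorem pderiv_integral_of_ne {i j : σ} (hij : i ≠ j) (f : MvPolynomial σ K) :
    pderiv i (integral j f) = integral j (pderiv i f) := by
  induction f using MvPolynomial.induction_on' with
  | monomial m a =>
    rw [integral_monomial, pderiv_monomial, pderiv_monomial, integral_monomial,
      Finsupp.add_single_tsub_single_comm hij]
    simp [hij, hij.symm, div_mul_eq_mul_div]
  | add f g hf hg => rw [map_add, map_add, hf, hg, map_add, map_add]

theorem coeff_integral_of_eq_zero {i : σ} {m : σ →₀ ℕ} (hm : m i = 0) (f : MvPolynomial σ K) :
    coeff m (integral i f) = 0 := by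
  classical
  induction f using MvPolynomial.induction_on' with
  | monomial n a =>
    rw [integral_monomial, coeff_monomial, if_neg]
    rintro rfl
    simp at hm
  | add f g hf hg => rw [map_add, coeff_add, hf, hg, add_zero]

theorem coeff_add_single_integral [CharZero K] (i : σ) (m : σ →₀ ℕ) (f : MvPolynomial σ K) :
    coeff (m + Finsupp.single i 1) (integral i f) = coeff m f / (m i + 1) := by
  rw [← pderiv_integral_self i f, coeff_pderiv, pderiv_integral_self,
    mul_div_cancel_right₀ _ (Nat.cast_add_one_ne_zero _)]

theorem support_integral_subset [CharZero K] (i : σ) (f : MvPolynomial σ K) :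
    (integral i f).support ⊆ (f * X i).support := by
  intro n hn
  have hni : n i ≠ 0 := fun h => mem_support_iff.mp hn (coeff_integral_of_eq_zero h f)
  have hn' : n - Finsupp.single i 1 + Finsupp.single i 1 = n :=
    tsub_add_cancel_of_le (Finsupp.single_le_iff.mpr (Nat.one_le_iff_ne_zero.mpr hni))
  rw [support_mul_X, Finset.mem_map]
  refine ⟨n - Finsupp.single i 1, ?_, hn'⟩
  rw [← hn', mem_support_iff, coeff_add_single_integral] at hn
  exact mem_support_iff.mpr (div_ne_zero_iff.mp hn).1

theorem totalDegree_integral_le [CharZero K] (i : σ) (f : MvPolynomial σ K) :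
    (integral i f).totalDegree ≤ f.totalDegree + 1 :=
  calc (integral i f).totalDegree ≤ (f * X i).totalDegree :=
        totalDegree_le_of_support_subset (support_integral_subset i f)
    _ ≤ f.totalDegree + (X i : MvPolynomial σ K).totalDegree := totalDegree_mul _ _
    _ = f.totalDegree + 1 := by rw [totalDegree_X]

theorem support_integral_pderiv_subset [CharZero K] (i : σ) (f : MvPolynomial σ K) :
    (integral i (pderiv i f)).support ⊆ f.support := by
  intro n hn
  have hn' := support_integral_subset i _ hn
  rw [support_mul_X, Finset.mem_map] at hn'
  obtain ⟨m, hm, rfl⟩ := hn'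
  rw [mem_support_iff, coeff_pderiv] at hm
  exact mem_support_iff.mpr (left_ne_zero_of_mul hm)

end MvPolynomial

/-- Polynomial Poincaré lemma in 2D: every divergence-free polynomial vector field
of degree ≤ p is the rotated gradient (curl) of a polynomial potential of
degree ≤ p + 1. -/
theorem divfree_poly_is_curl (p : ℕ) (w₁ w₂ : MvPolynomial (Fin 2) ℝ)
    (hw₁ : w₁.totalDegree ≤ p) (hw₂ : w₂.totalDegree ≤ p)
    (hdiv : pderiv 0 w₁ + pderiv 1 w₂ = 0) :
    ∃ φ : MvPolynomial (Fin 2) ℝ, φ.totalDegree ≤ p + 1 ∧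
      w₁ = pderiv 1 φ ∧ w₂ = -(pderiv 0 φ) := by
  set v := w₂ - integral 1 (pderiv 1 w₂) with hv
  have hv_deg : v.totalDegree ≤ p :=
    (totalDegree_sub _ _).trans <| max_le hw₂ <|
      (totalDegree_le_of_support_subset (support_integral_pderiv_subset 1 w₂)).trans hw₂
  have hv_y : pderiv 1 v = 0 := by rw [hv, map_sub, pderiv_integral_self, sub_self]
  refine ⟨integral 1 w₁ - integral 0 v, ?_, ?_, ?_⟩
  · exact (totalDegree_sub _ _).trans <| max_le
      ((totalDegree_integral_le 1 w₁).trans (by omega))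
      ((totalDegree_integral_le 0 v).trans (by omega))
  · rw [map_sub, pderiv_integral_self, pderiv_integral_of_ne one_ne_zero, hv_y, map_zero,
      sub_zero]
  · rw [map_sub, pderiv_integral_self, pderiv_integral_of_ne zero_ne_one,
      eq_neg_of_add_eq_zero_left hdiv, map_neg, hv]
    ring
end

section
/- Let p ≥ 5 be a natural number and let φ ∈ ℝ[x,y] (i.e. MvPolynomial (Fin 2) ℝ) be a polynomial of total degree at most p + 1. Suppose that φ and both of its first-order partial derivatives ∂ₓφ, ∂ᵧφ vanish at every point of each of the three lines {(x,y) : x = 0}, {(x,y) : y = 0}, and {(x,y) : x + y = 1}. Then there exists a polynomial ψ ∈ ℝ[x,y] of total degree at most p − 5 such that φ = x²·y²·(1−x−y)²·ψ. -/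
/-!
A polynomial over an infinite domain that vanishes on the hyperplane `x i = 0` is divisible by
`X i`; if its `i`-th partial derivative vanishes there as well, so does the quotient, and `X i ^ 2`
divides it. The affine involution exchanging the barycentric coordinates `x` and `1 - x - y`
carries the edge `x + y = 1` to the edge `x = 0`. The three squared linear factors are pairwise
coprime in the factorial ring `ℝ[x, y]`, so the squared cubic bubble divides `φ`, and the degree
bound follows from additivity of the total degree over a domain.
-/

open MvPolynomial

namespace MvPolynomial

variable {R σ : Type*} [CommRing R] [IsDomain R] [Infinite R] {p : MvPolynomial σ R} {i : σ}

theorem X_dvd_of_eval_eq_zero (h : ∀ v : σ → R, v i = 0 → eval v p = 0) : X i ∣ p := by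
  classical
  set r := p.modMonomial (Finsupp.single i 1) with hr
  have hi : i ∉ r.vars := by
    rw [mem_vars_iff_mem_support]
    rintro ⟨m, hm, him⟩
    rw [mem_support_iff, hr, coeff_modMonomial_of_le] at hm
    · exact hm rfl
    · simpa [Finsupp.single_le_iff, Nat.one_le_iff_ne_zero] using him
  rw [X_dvd_iff_modMonomial_eq_zero]
  refine MvPolynomial.funext fun v => ?_
  -- `r` does not involve `X i`, so it cannot tell `v` from its projection onto `x i = 0`
  have hproj : eval v r = eval (Function.update v i 0) r :=
    hom_congr_vars (by ext; simp)
      (fun j hj _ => by simp [Function.update_of_ne (ne_of_mem_of_not_mem hj hi)]) rfl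
  have := h (Function.update v i 0) (by simp)
  rw [← divMonomial_add_modMonomial_single p i] at this
  simpa [← hr, ← hproj] using this

theorem X_sq_dvd_of_eval_eq_zero (h : ∀ v : σ → R, v i = 0 → eval v p = 0)
    (h' : ∀ v : σ → R, v i = 0 → eval v (pderiv i p) = 0) : X i ^ 2 ∣ p := by
  obtain ⟨q, rfl⟩ := X_dvd_of_eval_eq_zero h
  have hq : ∀ v : σ → R, v i = 0 → eval v q = 0 := fun v hv => by
    simpa [pderiv_mul, hv] using h' v hv
  obtain ⟨s, rfl⟩ := X_dvd_of_eval_eq_zero hq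
  exact ⟨s, by ring⟩

end MvPolynomial

section Triangle

variable {R : Type*} [CommRing R]

private theorem aeval_swapBarycentric_comp_self :
    (aeval ![1 - X 0 - X 1, X 1]).comp (aeval ![1 - X 0 - X 1, X 1]) =
      AlgHom.id R (MvPolynomial (Fin 2) R) := by
  refine algHom_ext fun i => ?_
  fin_cases i <;> simp
  ring

/-- The substitution `(x, y) ↦ (1 - x - y, y)`. -/
noncomputable def swapBarycentric : MvPolynomial (Fin 2) R ≃ₐ[R] MvPolynomial (Fin 2) R :=
  AlgEquiv.ofAlgHom _ _ aeval_swapBarycentric_comp_self aeval_swapBarycentric_comp_self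

@[simp]
theorem swapBarycentric_X_zero :
    swapBarycentric (X 0 : MvPolynomial (Fin 2) R) = 1 - X 0 - X 1 := by
  simp [swapBarycentric]

@[simp]
theorem swapBarycentric_swapBarycentric (q : MvPolynomial (Fin 2) R) :
    swapBarycentric (swapBarycentric q) = q :=
  congrArg (· q) aeval_swapBarycentric_comp_self

theorem eval_swapBarycentric (v : Fin 2 → R) (q : MvPolynomial (Fin 2) R) :
    eval v (swapBarycentric q) = eval ![1 - v 0 - v 1, v 1] q := by
  rw [← aeval_eq_eval, ← aeval_eq_eval, swapBarycentric, AlgEquiv.ofAlgHom_apply,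
    ← AlgHom.comp_apply, comp_aeval]
  congr
  funext i
  fin_cases i <;> simp

theorem pderiv_zero_swapBarycentric (q : MvPolynomial (Fin 2) R) :
    pderiv 0 (swapBarycentric q) = -swapBarycentric (pderiv 0 q) := by
  induction q using MvPolynomial.induction_on with
  | C a => simp [swapBarycentric, algebraMap_eq]
  | add p q hp hq => simp only [map_add, hp, hq]; ring
  | mul_X p i hp =>
    rw [map_mul, pderiv_mul, hp, pderiv_mul, map_add, map_mul, map_mul]
    fin_cases i <;> simp [swapBarycentric, pderiv_X]; ring

variable [IsDomain R] [Infinite R]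

theorem sq_dvd_of_eval_eq_zero_of_add_eq_one {φ : MvPolynomial (Fin 2) R}
    (h : ∀ x y : R, x + y = 1 → eval ![x, y] φ = 0)
    (h' : ∀ x y : R, x + y = 1 → eval ![x, y] (pderiv 0 φ) = 0) :
    (1 - X 0 - X 1) ^ 2 ∣ φ := by
  have hX : X 0 ^ 2 ∣ swapBarycentric φ := by
    refine X_sq_dvd_of_eval_eq_zero (fun v hv => ?_) (fun v hv => ?_)
    · rw [eval_swapBarycentric]
      exact h _ _ (by rw [hv]; ring)
    · rw [pderiv_zero_swapBarycentric, eval_neg, eval_swapBarycentric, neg_eq_zero]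
      exact h' _ _ (by rw [hv]; ring)
  simpa using map_dvd swapBarycentric hX

end Triangle

section Bubble

variable {R : Type*} [CommRing R]

noncomputable def cubicBubble : MvPolynomial (Fin 2) R := X 0 * X 1 * (1 - X 0 - X 1)

section Nontrivial

variable [Nontrivial R]

theorem one_sub_X_zero_sub_X_one_ne_zero : (1 - X 0 - X 1 : MvPolynomial (Fin 2) R) ≠ 0 :=
  fun h => by simpa using congrArg (eval 0) h

theorem totalDegree_one_sub_X_zero_sub_X_one :
    (1 - X 0 - X 1 : MvPolynomial (Fin 2) R).totalDegree = 1 := by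
  apply le_antisymm
  · refine (totalDegree_sub _ _).trans
      (max_le ((totalDegree_sub _ _).trans (max_le ?_ ?_)) ?_) <;> simp
  · refine le_totalDegree (s := Finsupp.single 0 1) ?_ |>.trans_eq' (by simp)
    simp [coeff_X, coeff_one, Finsupp.single_eq_single_iff, eq_comm (a := (0 : Fin 2 →₀ ℕ))]

end Nontrivial

variable [IsDomain R]

theorem cubicBubble_ne_zero : (cubicBubble : MvPolynomial (Fin 2) R) ≠ 0 :=
  mul_ne_zero (mul_ne_zero (X_ne_zero 0) (X_ne_zero 1)) one_sub_X_zero_sub_X_one_ne_zero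

theorem totalDegree_cubicBubble : (cubicBubble : MvPolynomial (Fin 2) R).totalDegree = 3 := by
  rw [cubicBubble, totalDegree_mul_of_isDomain (mul_ne_zero (X_ne_zero 0) (X_ne_zero 1))
    one_sub_X_zero_sub_X_one_ne_zero, totalDegree_mul_of_isDomain (X_ne_zero 0) (X_ne_zero 1),
    totalDegree_X, totalDegree_X, totalDegree_one_sub_X_zero_sub_X_one]

theorem totalDegree_cubicBubble_sq :
    (cubicBubble ^ 2 : MvPolynomial (Fin 2) R).totalDegree = 6 := by
  rw [sq, totalDegree_mul_of_isDomain cubicBubble_ne_zero cubicBubble_ne_zero,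
    totalDegree_cubicBubble]

theorem cubicBubble_sq_dvd [UniqueFactorizationMonoid R] {φ : MvPolynomial (Fin 2) R}
    (h₀ : X 0 ^ 2 ∣ φ) (h₁ : X 1 ^ 2 ∣ φ) (h₂ : (1 - X 0 - X 1) ^ 2 ∣ φ) :
    cubicBubble ^ 2 ∣ φ := by
  have h01 : IsRelPrime (X 0 : MvPolynomial (Fin 2) R) (X 1) :=
    X_prime.irreducible.isRelPrime_iff_not_dvd.2 (by simp [X_dvd_X])
  have h02 : IsRelPrime (X 0 : MvPolynomial (Fin 2) R) (1 - X 0 - X 1) :=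
    X_prime.irreducible.isRelPrime_iff_not_dvd.2 fun ⟨t, ht⟩ => by
      simpa using congrArg (eval 0) ht
  have h12 : IsRelPrime (X 1 : MvPolynomial (Fin 2) R) (1 - X 0 - X 1) :=
    X_prime.irreducible.isRelPrime_iff_not_dvd.2 fun ⟨t, ht⟩ => by
      simpa using congrArg (eval 0) ht
  rw [cubicBubble, mul_pow, mul_pow]
  exact (h02.pow.mul_left h12.pow).mul_dvd (h01.pow.mul_dvd h₀ h₁) h₂

end Bubble

theorem bubble_factorization_general (p : ℕ) (φ : MvPolynomial (Fin 2) ℝ)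
    (hdeg : φ.totalDegree ≤ p + 1)
    (h₁ : ∀ y : ℝ, eval ![0, y] φ = 0 ∧ eval ![0, y] (pderiv 0 φ) = 0 ∧
      eval ![0, y] (pderiv 1 φ) = 0)
    (h₂ : ∀ x : ℝ, eval ![x, 0] φ = 0 ∧ eval ![x, 0] (pderiv 0 φ) = 0 ∧
      eval ![x, 0] (pderiv 1 φ) = 0)
    (h₃ : ∀ x y : ℝ, x + y = 1 → eval ![x, y] φ = 0 ∧ eval ![x, y] (pderiv 0 φ) = 0 ∧
      eval ![x, y] (pderiv 1 φ) = 0) :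
    ∃ ψ : MvPolynomial (Fin 2) ℝ, ψ.totalDegree ≤ p - 5 ∧
      φ = (X 0) ^ 2 * (X 1) ^ 2 * (1 - X 0 - X 1) ^ 2 * ψ := by
  have eta (v : Fin 2 → ℝ) : v = ![v 0, v 1] := by ext j; fin_cases j <;> rfl
  have hX₀ : X 0 ^ 2 ∣ φ := X_sq_dvd_of_eval_eq_zero
    (fun v hv => by rw [eta v, hv]; exact (h₁ _).1)
    (fun v hv => by rw [eta v, hv]; exact (h₁ _).2.1)
  have hX₁ : X 1 ^ 2 ∣ φ := X_sq_dvd_of_eval_eq_zero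
    (fun v hv => by rw [eta v, hv]; exact (h₂ _).1)
    (fun v hv => by rw [eta v, hv]; exact (h₂ _).2.2)
  have hL : (1 - X 0 - X 1) ^ 2 ∣ φ := sq_dvd_of_eval_eq_zero_of_add_eq_one
    (fun x y hxy => (h₃ x y hxy).1) (fun x y hxy => (h₃ x y hxy).2.1)
  obtain ⟨ψ, hψ⟩ := cubicBubble_sq_dvd hX₀ hX₁ hL
  refine ⟨ψ, ?_, by rw [hψ, cubicBubble]; ring⟩
  rcases eq_or_ne ψ 0 with rfl | hψ₀
  · simp
  have hdegφ := totalDegree_mul_of_isDomain (pow_ne_zero 2 cubicBubble_ne_zero) hψ₀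
  rw [← hψ, totalDegree_cubicBubble_sq] at hdegφ
  omega

/-- A polynomial of degree ≤ p+1 (p ≥ 5) vanishing together with its gradient on the
three lines `x = 0`, `y = 0`, `x + y = 1` is a multiple of the squared cubic bubble
`x²y²(1−x−y)²`, with quotient of degree ≤ p − 5. -/
theorem bubble_factorization (p : ℕ) (hp : 5 ≤ p) (φ : MvPolynomial (Fin 2) ℝ)
    (hdeg : φ.totalDegree ≤ p + 1)
    (h₁ : ∀ y : ℝ, eval ![0, y] φ = 0 ∧ eval ![0, y] (pderiv 0 φ) = 0 ∧
      eval ![0, y] (pderiv 1 φ) = 0)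
    (h₂ : ∀ x : ℝ, eval ![x, 0] φ = 0 ∧ eval ![x, 0] (pderiv 0 φ) = 0 ∧
      eval ![x, 0] (pderiv 1 φ) = 0)
    (h₃ : ∀ x y : ℝ, x + y = 1 → eval ![x, y] φ = 0 ∧ eval ![x, y] (pderiv 0 φ) = 0 ∧
      eval ![x, y] (pderiv 1 φ) = 0) :
    ∃ ψ : MvPolynomial (Fin 2) ℝ, ψ.totalDegree ≤ p - 5 ∧
      φ = (X 0) ^ 2 * (X 1) ^ 2 * (1 - X 0 - X 1) ^ 2 * ψ :=
  bubble_factorization_general p φ hdeg h₁ h₂ h₃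
end

section
/- Let p ≥ 1 be a natural number. In the ℝ-vector space of polynomial vector fields Fin 3 → MvPolynomial (Fin 3) ℝ, consider the Raviart–Thomas shape-function space RT_p := {q : each component of q has total degree ≤ p−1} + {(x₁·r, x₂·r, x₃·r) : r ∈ MvPolynomial (Fin 3) ℝ, total degree of r ≤ p−1}, the sum of two finite-dimensional subspaces. Then dim_ℝ RT_p = p·(p+1)·(p+3)/2. -/
/-!
Multiplication by `x₁` is injective, so `x·P_{p-1} ≅ P_{p-1}`. Over a domain
`deg (xᵢ r) = deg r + 1` for `r ≠ 0`, hence `x·P_{p-1}` meets `(P_{p-1})³` exactly in `x·P_{p-2}`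
(in `0` when `p = 1`). Grassmann's formula then gives
`dim RT_p = 3·C(p+2,3) + C(p+2,3) − C(p+1,3) = p(p+1)(p+3)/2`,
with `C(k+n,n)` monomials of degree `≤ k` in `n` variables counted by stars and bars.
-/

open MvPolynomial

/-- Vector fields with polynomial components of total degree at most `k`,
as a subspace of `Fin 3 → MvPolynomial (Fin 3) ℝ`. -/
noncomputable def polyVec (k : ℕ) : Submodule ℝ (Fin 3 → MvPolynomial (Fin 3) ℝ) :=
  Submodule.pi Set.univ (fun _ => restrictTotalDegree (Fin 3) ℝ k)

/-- The linear map `r ↦ (x₁·r, x₂·r, x₃·r)`. -/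
noncomputable def mulByX :
    MvPolynomial (Fin 3) ℝ →ₗ[ℝ] (Fin 3 → MvPolynomial (Fin 3) ℝ) :=
  LinearMap.pi (fun i => LinearMap.mulLeft ℝ (X i))

/-- The Raviart–Thomas shape-function space `RT_p = (P_{p−1})³ + x·P_{p−1}`. -/
noncomputable def RTSpace (p : ℕ) : Submodule ℝ (Fin 3 → MvPolynomial (Fin 3) ℝ) :=
  polyVec (p - 1) ⊔ Submodule.map mulByX (restrictTotalDegree (Fin 3) ℝ (p - 1))

open Finset Module

theorem Nat.six_mul_choose_three (n : ℕ) : 6 * (n + 2).choose 3 = n * (n + 1) * (n + 2) := by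
  rw [show 6 = Nat.factorial 3 from rfl, ← Nat.descFactorial_eq_factorial_mul_choose]
  simp only [Nat.descFactorial_succ, add_tsub_cancel_right, Nat.add_one_sub_one, tsub_zero,
    Nat.descFactorial_zero, mul_one]
  ring

theorem Finsupp.card_setOf_sum_le {σ : Type*} [Fintype σ] (k : ℕ) :
    Nat.card {s : σ →₀ ℕ | (s.sum fun _ e => e) ≤ k}
      = (k + Fintype.card σ).choose (Fintype.card σ) := by
  classical
  have hset : {s : σ →₀ ℕ | (s.sum fun _ e => e) ≤ k}
      = ↑((range (k + 1)).biUnion fun i => (univ : Finset σ).finsuppAntidiag i) := by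
    ext s
    simp [Finsupp.sum_fintype]
  have hdisj : (range (k + 1) : Set ℕ).PairwiseDisjoint
      fun i => (univ : Finset σ).finsuppAntidiag i :=
    fun i _ j _ hij => disjoint_left.mpr fun s hi hj => hij <| by
      rw [mem_finsuppAntidiag] at hi hj; rw [← hi.1, ← hj.1]
  rw [hset, Nat.card_coe_set_eq, Set.ncard_coe_finset, card_biUnion hdisj]
  simp only [card_finsuppAntidiag_nat_eq_multichoose, card_univ]
  exact Nat.sum_range_multichoose k _

theorem MvPolynomial.finrank_restrictTotalDegree (σ R : Type*) [Fintype σ] [CommRing R]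
    [Nontrivial R] (k : ℕ) :
    finrank R (restrictTotalDegree σ R k) = (k + Fintype.card σ).choose (Fintype.card σ) := by
  rw [restrictTotalDegree, finrank_eq_nat_card_basis (basisRestrictSupport R _),
    Finsupp.card_setOf_sum_le]

def Submodule.piUnivEquiv {R ι : Type*} [Semiring R] {φ : ι → Type*}
    [∀ i, AddCommMonoid (φ i)] [∀ i, Module R (φ i)] (p : ∀ i, Submodule R (φ i)) :
    Submodule.pi Set.univ p ≃ₗ[R] ∀ i, p i where
  toFun v i := ⟨v.1 i, v.2 i (Set.mem_univ i)⟩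
  map_add' _ _ := rfl
  map_smul' _ _ := rfl
  invFun v := ⟨fun i => v i, fun i _ => (v i).2⟩
  left_inv _ := rfl
  right_inv _ := rfl

instance (k : ℕ) : FiniteDimensional ℝ (polyVec k) :=
  Module.Finite.equiv (Submodule.piUnivEquiv _).symm

theorem finrank_polyVec (k : ℕ) : finrank ℝ (polyVec k) = 3 * (k + 3).choose 3 := by
  rw [polyVec, (Submodule.piUnivEquiv _).finrank_eq, finrank_pi_fintype,
    finrank_restrictTotalDegree, sum_const, card_univ, Fintype.card_fin, smul_eq_mul]

theorem mulByX_apply (r : MvPolynomial (Fin 3) ℝ) (i : Fin 3) : mulByX r i = X i * r := rfl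

theorem mulByX_injective : Function.Injective mulByX :=
  fun _ _ h => mul_left_cancel₀ (X_ne_zero 0) (congrFun h 0)

theorem finrank_map_mulByX (k : ℕ) :
    finrank ℝ (Submodule.map mulByX (restrictTotalDegree (Fin 3) ℝ k)) = (k + 3).choose 3 := by
  rw [← (Submodule.equivMapOfInjective _ mulByX_injective _).finrank_eq,
    finrank_restrictTotalDegree, Fintype.card_fin]

theorem mulByX_mem_polyVec_iff {r : MvPolynomial (Fin 3) ℝ} {k : ℕ} :
    mulByX r ∈ polyVec k ↔ r = 0 ∨ r.totalDegree + 1 ≤ k := by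
  rcases eq_or_ne r 0 with rfl | hr
  · simp
  simp only [polyVec, Submodule.mem_pi, Set.mem_univ, forall_const, mulByX_apply,
    mem_restrictTotalDegree, totalDegree_mul_of_isDomain (X_ne_zero _) hr, totalDegree_X, hr,
    false_or]
  omega

theorem comap_mulByX_polyVec_zero : Submodule.comap mulByX (polyVec 0) = ⊥ := by
  ext r
  simp [mulByX_mem_polyVec_iff]

theorem comap_mulByX_polyVec_succ (m : ℕ) :
    Submodule.comap mulByX (polyVec (m + 1)) = restrictTotalDegree (Fin 3) ℝ m := by
  ext r
  rw [Submodule.mem_comap, mulByX_mem_polyVec_iff, mem_restrictTotalDegree]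
  rcases eq_or_ne r 0 with rfl | hr
  · simp
  · simp [hr]

theorem finrank_polyVec_inf_map_mulByX (k : ℕ) :
    finrank ℝ (polyVec k ⊓ Submodule.map mulByX (restrictTotalDegree (Fin 3) ℝ k) :
      Submodule ℝ _) = (k + 2).choose 3 := by
  rw [inf_comm, Submodule.map_inf_eq_map_inf_comap,
    ← (Submodule.equivMapOfInjective _ mulByX_injective _).finrank_eq]
  cases k with
  | zero => simp [comap_mulByX_polyVec_zero]
  | succ m =>
    rw [comap_mulByX_polyVec_succ, inf_eq_right.mpr fun r hr => by
        rw [mem_restrictTotalDegree] at hr ⊢; omega,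
      finrank_restrictTotalDegree, Fintype.card_fin]

theorem rt_dimension (p : ℕ) (hp : 1 ≤ p) :
    Module.finrank ℝ (RTSpace p) = p * (p + 1) * (p + 3) / 2 := by
  obtain ⟨k, rfl⟩ := Nat.exists_eq_add_of_le' hp
  have hsum := Submodule.finrank_sup_add_finrank_inf_eq (polyVec k)
    (Submodule.map mulByX (restrictTotalDegree (Fin 3) ℝ k))
  rw [finrank_polyVec, finrank_map_mulByX, finrank_polyVec_inf_map_mulByX] at hsum
  have h₁ := Nat.six_mul_choose_three (k + 1)
  have h₀ := Nat.six_mul_choose_three k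
  rw [RTSpace, Nat.add_sub_cancel]
  refine Nat.eq_div_of_mul_eq_left two_ne_zero ?_
  linarith
end
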